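/- arXiv:0803.3787 — 2 statements merged into one kernel-verified Lean document; each statement's English description precedes it below -/
import Mathlib

section
/- For all real x ≥ 1, |log x · ∑_{k ≤ x} μ(k)/k − ∑_{k ≤ x} μ(k)·log(k)/k| ≤ 3 + γ, where γ is Euler's constant. -/
/-!
Since `log x = log (x / k) + log k`, the quantity inside the absolute value is
`∑_{k ≤ x} μ(k)/k · log (x/k)`. Replace `log (x/k)` by `H(⌊x/k⌋) - γ`, with `H` the harmonic
numbers; the error is at most `1/⌊x/k⌋ ≤ 2k/x`, so after weighting by `μ(k)/k` the errors add up
to at most `2`. Because `⌊x/k⌋ = ⌊⌊x⌋/k⌋`, Möbius inversion gives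
`∑_{k ≤ x} μ(k)/k · H(⌊x/k⌋) = ∑_{n ≤ x} (1/n) ∑_{d ∣ n} μ(d) = 1`, and the remaining term is
`γ · ∑_{k ≤ x} μ(k)/k`, where `|∑_{k ≤ N} μ(k)/k| ≤ 1` follows from `∑_{k ≤ N} μ(k) ⌊N/k⌋ = 1`.
-/

open Finset Real
open scoped ArithmeticFunction.Moebius ArithmeticFunction.zeta

theorem Nat.cast_div_sub_cast_div_mem_Ico {K : Type*} [Field K] [LinearOrder K]
    [IsStrictOrderedRing K] [FloorSemiring K] (m n : ℕ) :
    (m : K) / n - ↑(m / n) ∈ Set.Ico 0 1 := by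
  rw [← Nat.floor_div_eq_div (K := K), Set.mem_Ico, sub_nonneg, sub_lt_iff_lt_add']
  exact ⟨Nat.floor_le (by positivity), Nat.lt_floor_add_one _⟩

theorem harmonic_sub_log_sub_eulerMascheroniConstant_mem_Ioo {n : ℕ} (hn : n ≠ 0) :
    harmonic n - log n - eulerMascheroniConstant ∈ Set.Ioo 0 (1 / (n : ℝ)) := by
  obtain ⟨m, rfl⟩ := Nat.exists_eq_succ_of_ne_zero hn
  have lower := eulerMascheroniConstant_lt_eulerMascheroniSeq' (m + 1)
  have upper := eulerMascheroniSeq_lt_eulerMascheroniConstant m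
  simp only [eulerMascheroniSeq', eulerMascheroniSeq, Nat.succ_ne_zero, if_false] at lower upper
  rw [Set.mem_Ioo, harmonic_succ]
  rw [harmonic_succ] at lower
  push_cast [one_div] at lower ⊢
  constructor <;> linarith

theorem abs_log_add_eulerMascheroniConstant_sub_harmonic_floor_le {t : ℝ} (ht : 1 ≤ t) :
    |log t + eulerMascheroniConstant - harmonic ⌊t⌋₊| ≤ 2 / t := by
  set n := ⌊t⌋₊
  have hn : 0 < n := Nat.floor_pos.2 ht
  have hn' : (0 : ℝ) < n := Nat.cast_pos.2 hn
  have hnt : (n : ℝ) ≤ t := Nat.floor_le (by linarith)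
  have htn : t < n + 1 := Nat.lt_floor_add_one t
  obtain ⟨hH₀, hH₁⟩ := harmonic_sub_log_sub_eulerMascheroniConstant_mem_Ioo hn.ne'
  have hlog₀ : log n ≤ log t := log_le_log hn' hnt
  have hlog₁ : log t - log n ≤ 1 / n := by
    rw [← log_div (by linarith) hn'.ne']
    calc log (t / n) ≤ t / n - 1 := log_le_sub_one_of_pos (by positivity)
      _ ≤ 1 / n := by rw [div_sub_one hn'.ne']; gcongr; linarith
  calc |log t + eulerMascheroniConstant - harmonic n| ≤ 1 / n := by
        rw [abs_le]; constructor <;> linarith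
    _ ≤ 2 / t := by
        rw [div_le_div_iff₀ hn' (by linarith)]
        linarith [(Nat.one_le_cast (α := ℝ)).2 hn]

namespace ArithmeticFunction

theorem sum_Ioc_one_apply {R : Type*} [Semiring R] {N : ℕ} (hN : N ≠ 0) :
    ∑ n ∈ Ioc 0 N, (1 : ArithmeticFunction R) n = 1 := by
  simp [one_apply, Nat.one_le_iff_ne_zero.2 hN]

section PdivId

variable {K : Type*} [Field K]

theorem pdiv_id_mul_pdiv_id (f g : ArithmeticFunction K) :
    f.pdiv ↑ArithmeticFunction.id * g.pdiv ↑ArithmeticFunction.id =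
      (f * g).pdiv ↑ArithmeticFunction.id := by
  ext n
  simp only [mul_apply, pdiv_apply, natCoe_apply, id_apply, sum_div]
  refine sum_congr rfl fun d hd => ?_
  rw [← (Nat.mem_divisorsAntidiagonal.1 hd).1, Nat.cast_mul, div_mul_div_comm]

theorem one_pdiv_id : (1 : ArithmeticFunction K).pdiv ↑ArithmeticFunction.id = 1 := by
  ext n
  by_cases hn : n = 1 <;> simp [hn]

theorem sum_Ioc_zeta_pdiv_id [CharZero K] (N : ℕ) :
    ∑ m ∈ Ioc 0 N, (ζ : ArithmeticFunction K).pdiv ↑ArithmeticFunction.id m = harmonic N := by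
  rw [harmonic_eq_sum_Icc, ← Icc_add_one_left_eq_Ioc, zero_add]
  push_cast
  refine sum_congr rfl fun m hm => ?_
  simp [Nat.one_le_iff_ne_zero.1 (mem_Icc.1 hm).1]

end PdivId

theorem sum_moebius_mul_div_eq_one {R : Type*} [Ring R] {N : ℕ} (hN : N ≠ 0) :
    ∑ k ∈ Ioc 0 N, (μ k : R) * ↑(N / k) = 1 := by
  simpa [coe_moebius_mul_coe_zeta, sum_Ioc_one_apply hN] using
    (sum_Ioc_mul_zeta_eq_sum (μ : ArithmeticFunction R) N).symm

theorem sum_moebius_div_mul_harmonic_eq_one {K : Type*} [Field K] [CharZero K] {N : ℕ}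
    (hN : N ≠ 0) : ∑ k ∈ Ioc 0 N, (μ k : K) / k * harmonic (N / k) = 1 := by
  have h := sum_Ioc_mul_eq_sum_sum ((μ : ArithmeticFunction K).pdiv ↑ArithmeticFunction.id)
    ((ζ : ArithmeticFunction K).pdiv ↑ArithmeticFunction.id) N
  rw [pdiv_id_mul_pdiv_id, coe_moebius_mul_coe_zeta, one_pdiv_id, sum_Ioc_one_apply hN] at h
  simp only [sum_Ioc_zeta_pdiv_id] at h
  simpa using h.symm

theorem abs_moebius_cast_le_one {R : Type*} [Ring R] [LinearOrder R] [IsStrictOrderedRing R]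
    (n : ℕ) : |(μ n : R)| ≤ 1 := by
  exact_mod_cast abs_moebius_le_one

theorem abs_sum_moebius_div_le_one (N : ℕ) : |∑ k ∈ Ioc 0 N, (μ k : ℝ) / k| ≤ 1 := by
  rcases Nat.eq_zero_or_pos N with rfl | hN
  · simp
  set S := ∑ k ∈ Ioc 0 N, (μ k : ℝ) / k
  set r : ℕ → ℝ := fun k => (N : ℝ) / k - ↑(N / k)
  have hr k : r k ∈ Set.Ico 0 1 := Nat.cast_div_sub_cast_div_mem_Ico N k
  have hr_one : r 1 = 0 := by simp [r]
  have hS_sub_one : N * S - 1 = ∑ k ∈ Ioc 0 N, (μ k : ℝ) * r k := by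
    rw [← sum_moebius_mul_div_eq_one hN.ne', mul_sum, ← sum_sub_distrib]
    refine sum_congr rfl fun k _ => ?_
    simp only [r]
    ring
  have habs_sub_one : |N * S - 1| ≤ N - 1 := calc
    |N * S - 1| ≤ ∑ k ∈ Ioc 0 N, r k := by
        rw [hS_sub_one]
        refine (abs_sum_le_sum_abs _ _).trans (sum_le_sum fun k _ => ?_)
        rw [abs_mul, abs_of_nonneg (hr k).1]
        exact mul_le_of_le_one_left (hr k).1 (abs_moebius_cast_le_one k)
    _ = ∑ k ∈ (Ioc 0 N).erase 1, r k := (sum_erase _ hr_one).symm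
    _ ≤ ((Ioc 0 N).erase 1).card • 1 := sum_le_card_nsmul _ _ _ fun k _ => (hr k).2.le
    _ = N - 1 := by
        rw [card_erase_of_mem (by simp; omega)]
        simp [hN]
  have habs : |N * S| ≤ N := by
    linarith [abs_sub_abs_le_abs_sub (N * S) 1, abs_one (α := ℝ)]
  rw [abs_mul, Nat.abs_cast] at habs
  exact (mul_le_iff_le_one_right (by positivity)).1 habs

end ArithmeticFunction

theorem log_mul_sum_moebius_div_sub_sum_moebius_mul_log_div {x : ℝ} (hx : x ≠ 0) {N : ℕ}
    (hN : N ≠ 0) :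
    log x * ∑ k ∈ Ioc 0 N, (μ k : ℝ) / k - ∑ k ∈ Ioc 0 N, (μ k : ℝ) * log k / k =
      1 - eulerMascheroniConstant * ∑ k ∈ Ioc 0 N, (μ k : ℝ) / k +
        ∑ k ∈ Ioc 0 N, (μ k : ℝ) / k *
          (log (x / k) + eulerMascheroniConstant - harmonic (N / k)) := by
  rw [← ArithmeticFunction.sum_moebius_div_mul_harmonic_eq_one (K := ℝ) hN, mul_sum, mul_sum,
    ← sum_sub_distrib, ← sum_sub_distrib, ← sum_add_distrib]
  refine sum_congr rfl fun k hk => ?_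
  rw [log_div hx (Nat.cast_pos.2 (mem_Ioc.1 hk).1).ne']
  ring

theorem abs_sum_moebius_div_mul_harmonic_error_le {x : ℝ} (hx : 1 ≤ x) :
    |∑ k ∈ Ioc 0 ⌊x⌋₊, (μ k : ℝ) / k *
        (log (x / k) + eulerMascheroniConstant - harmonic (⌊x⌋₊ / k))| ≤ 2 := by
  have hx₀ : 0 < x := by linarith
  have hterm : ∀ k ∈ Ioc 0 ⌊x⌋₊, |(μ k : ℝ) / k *
      (log (x / k) + eulerMascheroniConstant - harmonic (⌊x⌋₊ / k))| ≤ 2 / x := by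
    intro k hk
    obtain ⟨hk₀, hkx⟩ := mem_Ioc.1 hk
    have hk₀' : (0 : ℝ) < k := Nat.cast_pos.2 hk₀
    have hxk : 1 ≤ x / k := by
      rw [one_le_div hk₀']
      exact (Nat.cast_le.2 hkx).trans (Nat.floor_le hx₀.le)
    have h := abs_log_add_eulerMascheroniConstant_sub_harmonic_floor_le hxk
    rw [Nat.floor_div_natCast] at h
    calc _ = |(μ k : ℝ)| / k * |log (x / k) + eulerMascheroniConstant - harmonic (⌊x⌋₊ / k)| := by
          rw [abs_mul, abs_div, Nat.abs_cast]
      _ ≤ 1 / k * (2 / (x / k)) := by gcongr; exact ArithmeticFunction.abs_moebius_cast_le_one k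
      _ = 2 / x := by field_simp
  calc _ ≤ ∑ _k ∈ Ioc 0 ⌊x⌋₊, 2 / x := (abs_sum_le_sum_abs _ _).trans (sum_le_sum hterm)
    _ = ⌊x⌋₊ * (2 / x) := by simp
    _ ≤ x * (2 / x) := by gcongr; exact Nat.floor_le hx₀.le
    _ = 2 := by field_simp

theorem vonMangoldt_inequality (x : ℝ) (hx : 1 ≤ x) :
    |Real.log x * ∑ k ∈ Finset.Icc 1 ⌊x⌋₊, (ArithmeticFunction.moebius k : ℝ) / k -
        ∑ k ∈ Finset.Icc 1 ⌊x⌋₊, (ArithmeticFunction.moebius k : ℝ) * Real.log k / k| ≤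
      3 + Real.eulerMascheroniConstant := by
  have hx₀ : x ≠ 0 := by positivity
  have hN : ⌊x⌋₊ ≠ 0 := (Nat.floor_pos.2 hx).ne'
  rw [show Icc 1 ⌊x⌋₊ = Ioc 0 ⌊x⌋₊ from Icc_add_one_left_eq_Ioc 0 _,
    log_mul_sum_moebius_div_sub_sum_moebius_mul_log_div hx₀ hN]
  set γ := eulerMascheroniConstant
  set S := ∑ k ∈ Ioc 0 ⌊x⌋₊, (μ k : ℝ) / k
  set E := ∑ k ∈ Ioc 0 ⌊x⌋₊, (μ k : ℝ) / k * (log (x / k) + γ - harmonic (⌊x⌋₊ / k))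
  have hγ : 0 ≤ γ := by linarith [one_half_lt_eulerMascheroniConstant]
  have hS : |S| ≤ 1 := ArithmeticFunction.abs_sum_moebius_div_le_one ⌊x⌋₊
  have hE : |E| ≤ 2 := abs_sum_moebius_div_mul_harmonic_error_le hx
  calc |1 - γ * S + E| ≤ |1| + |γ * S| + |E| :=
        (abs_add_le _ _).trans (by gcongr; exact abs_sub _ _)
    _ ≤ 1 + γ * 1 + 2 := by rw [abs_one, abs_mul, abs_of_nonneg hγ]; gcongr
    _ = 3 + γ := by ring
end

section
/- Assume θ(x)/x → 1 as x → ∞, where θ(x) = ∑_{p ≤ x} log p. Then H(x)/log x → 0 as x → ∞, where H(x) = ∑_{p ≤ x} (log p / p) · g(x/p), the sum being over primes p ≤ x, and g(y) = ∑_{k ≤ y} μ(k)/k (g(y) = 0 for y < 1). -/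
open Filter

noncomputable def g (y : ℝ) : ℝ :=
  ∑ k ∈ Finset.Icc 1 ⌊y⌋₊, (ArithmeticFunction.moebius k : ℝ) / k

noncomputable def theta (x : ℝ) : ℝ :=
  ∑ p ∈ Finset.filter Nat.Prime (Finset.Icc 1 ⌊x⌋₊), Real.log p

noncomputable def H (x : ℝ) : ℝ :=
  ∑ p ∈ Finset.filter Nat.Prime (Finset.Icc 1 ⌊x⌋₊), (Real.log p / p) * g (x / p)

/-!
With `N = ⌊x⌋` and `c n = g (N / n) / n`, the identity `∑_{n ≤ N} c n = 1` gives
`H x - 1 = ∑_{n ≤ N} (a n - 1) c n`, where `a n = log n` on primes and `0` elsewhere.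
Summation by parts, with `∑_{k ≤ n} (a k - 1) = θ(n) - n`, turns this into
`θ(N) / N - 1 + ∑_{n < N} (θ(n) / n - 1) · n (c n - c (n + 1))`.
Because `|g| ≤ 1` and the increments `g (N / n) - g (N / (n + 1))` are sums of `μ(k) / k`
over disjoint blocks of `[1, N]`, the weights `n (c n - c (n + 1))` are bounded with total
mass `O(log N)`, while `θ(n) / n - 1 → 0`; so the sum is `o(log x)`.
-/

open Finset Asymptotics
open scoped ArithmeticFunction.Moebius ArithmeticFunction.zeta

noncomputable def gNat (N : ℕ) : ℝ :=
  ∑ k ∈ Icc 1 N, (μ k : ℝ) / k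

theorem g_eq_gNat_floor (y : ℝ) : g y = gNat ⌊y⌋₊ := rfl

theorem sum_Icc_moebius_mul_div {N : ℕ} (hN : 1 ≤ N) :
    ∑ k ∈ Icc 1 N, (μ k : ℝ) * (N / k : ℕ) = 1 := by
  have h := ArithmeticFunction.sum_Ioc_mul_zeta_eq_sum (μ : ArithmeticFunction ℝ) N
  simp only [ArithmeticFunction.coe_moebius_mul_coe_zeta, ArithmeticFunction.one_apply,
    ArithmeticFunction.intCoe_apply, sum_ite_eq', mem_Ioc] at h
  rw [show Icc 1 N = Ioc 0 N from rfl, ← h, if_pos ⟨one_pos, hN⟩]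

theorem sum_Icc_gNat_div_div {N : ℕ} (hN : 1 ≤ N) :
    ∑ n ∈ Icc 1 N, gNat (N / n) / n = 1 := by
  let inv : ArithmeticFunction ℝ := ⟨fun n => (n : ℝ)⁻¹, by simp⟩
  have hinv (n : ℕ) : inv n = (n : ℝ)⁻¹ := rfl
  -- `n ↦ n⁻¹` is completely multiplicative, so it factors out of the convolution
  have hmul (n : ℕ) : (inv * (μ : ArithmeticFunction ℝ).pmul inv) n =
      (n : ℝ)⁻¹ * (ζ * μ : ArithmeticFunction ℝ) n := by
    simp only [ArithmeticFunction.mul_apply, mul_sum]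
    refine sum_congr rfl fun d hd => ?_
    obtain ⟨rfl, hn⟩ := Nat.mem_divisorsAntidiagonal.1 hd
    simp [hinv, ArithmeticFunction.pmul_apply, left_ne_zero_of_mul hn]
    ring
  have h :=
    ArithmeticFunction.sum_Ioc_mul_eq_sum_sum inv ((μ : ArithmeticFunction ℝ).pmul inv) N
  simp only [hmul, ArithmeticFunction.coe_zeta_mul_coe_moebius, ArithmeticFunction.one_apply,
    mul_ite, mul_one, mul_zero, sum_ite_eq', mem_Ioc] at h
  rw [if_pos ⟨one_pos, hN⟩, Nat.cast_one, inv_one] at h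
  rw [show Icc 1 N = Ioc 0 N from rfl, h]
  refine sum_congr rfl fun n _ => ?_
  simp only [gNat, div_eq_inv_mul, mul_sum, hinv, ArithmeticFunction.pmul_apply,
    ArithmeticFunction.intCoe_apply, mul_comm]
  rfl

theorem abs_moebius_cast_le_one (k : ℕ) : |(μ k : ℝ)| ≤ 1 := by
  exact_mod_cast ArithmeticFunction.abs_moebius_le_one

/-- Writing `N / k = ⌊N / k⌋ + (N % k) / k`, the integer parts sum to `1` and the fractional
parts, of which the one at `k = N` vanishes, contribute at most `N - 1`. -/
theorem abs_gNat_le_one (N : ℕ) : |gNat N| ≤ 1 := by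
  rcases N with _ | M
  · simp [gNat]
  have hsplit : ((M + 1 : ℕ) : ℝ) * gNat (M + 1) =
      1 + ∑ k ∈ Icc 1 M, (μ k : ℝ) * (((M + 1) % k : ℕ) / k) := by
    have hterm (k : ℕ) : ((M + 1 : ℕ) : ℝ) * ((μ k : ℝ) / k) =
        (μ k : ℝ) * ((M + 1) / k : ℕ) + (μ k : ℝ) * (((M + 1) % k : ℕ) / k) := by
      rcases k.eq_zero_or_pos with rfl | hk
      · simp
      have hdiv : ((M + 1 : ℕ) : ℝ) = ((M + 1) / k : ℕ) * k + ((M + 1) % k : ℕ) := by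
        exact_mod_cast (Nat.div_add_mod' (M + 1) k).symm
      rw [hdiv]
      field_simp
    rw [gNat, mul_sum, sum_congr rfl fun k _ => hterm k, sum_add_distrib,
      sum_Icc_moebius_mul_div (Nat.le_add_left 1 M), sum_Icc_succ_top (Nat.le_add_left 1 M),
      Nat.mod_self]
    simp
  have hrem : |∑ k ∈ Icc 1 M, (μ k : ℝ) * (((M + 1) % k : ℕ) / k)| ≤ M := by
    calc |∑ k ∈ Icc 1 M, (μ k : ℝ) * (((M + 1) % k : ℕ) / k)|
        ≤ ∑ k ∈ Icc 1 M, (1 : ℝ) := by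
          refine (abs_sum_le_sum_abs _ _).trans (sum_le_sum fun k hk => ?_)
          have hk : 0 < k := (mem_Icc.1 hk).1
          rw [abs_mul, abs_of_nonneg (by positivity : (0 : ℝ) ≤ ((M + 1) % k : ℕ) / k)]
          refine mul_le_one₀ (abs_moebius_cast_le_one k) (by positivity) ?_
          rw [div_le_one (by positivity)]
          exact_mod_cast (Nat.mod_lt _ hk).le
      _ = M := by simp
  have hpos : (0 : ℝ) < (M + 1 : ℕ) := by positivity
  have habs : ((M + 1 : ℕ) : ℝ) * |gNat (M + 1)| ≤ (M + 1 : ℕ) * 1 := by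
    rw [← abs_of_pos hpos, ← abs_mul, hsplit, abs_of_pos hpos]
    calc _ ≤ |(1 : ℝ)| + _ := abs_add_le _ _
      _ ≤ (M + 1 : ℕ) * 1 := by push_cast; linarith
  exact le_of_mul_le_mul_left habs hpos

theorem abs_sum_Icc_sub_sum_Icc_le (f : ℕ → ℝ) {a b : ℕ} (hba : b ≤ a) :
    |∑ k ∈ Icc 1 a, f k - ∑ k ∈ Icc 1 b, f k| ≤
      ∑ k ∈ Icc 1 a, |f k| - ∑ k ∈ Icc 1 b, |f k| := by
  have hsplit (F : ℕ → ℝ) :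
      ∑ k ∈ Icc 1 a, F k - ∑ k ∈ Icc 1 b, F k = ∑ k ∈ Ioc b a, F k := by
    rw [show Icc 1 a = Ioc 0 a from rfl, show Icc 1 b = Ioc 0 b from rfl,
      ← sum_Ioc_consecutive F (Nat.zero_le b) hba, add_sub_cancel_left]
  rw [hsplit, hsplit]
  exact abs_sum_le_sum_abs _ _

/-- The blocks `(N / (n + 1), N / n]` are disjoint. -/
theorem sum_Ico_abs_sum_Icc_div_sub_le (f : ℕ → ℝ) (N : ℕ) :
    ∑ n ∈ Ico 1 N, |∑ k ∈ Icc 1 (N / n), f k - ∑ k ∈ Icc 1 (N / (n + 1)), f k| ≤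
      ∑ k ∈ Icc 1 N, |f k| := by
  rcases N.eq_zero_or_pos with rfl | hN
  · simp
  set P : ℕ → ℝ := fun m => ∑ k ∈ Icc 1 m, |f k|
  calc _ ≤ ∑ n ∈ Ico 1 N, (P (N / n) - P (N / (n + 1))) :=
        sum_le_sum fun n hn => abs_sum_Icc_sub_sum_Icc_le f
          (Nat.div_le_div_left n.le_succ (mem_Ico.1 hn).1)
    _ = P (N / 1) - P (N / N) := by
        have := sum_Ico_sub (fun n => -P (N / n)) hN
        simp only [sub_neg_eq_add, neg_add_eq_sub] at this
        rw [this]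
    _ ≤ P N := by
        rw [Nat.div_one, sub_le_self_iff]
        exact sum_nonneg fun k _ => abs_nonneg _

theorem sum_Ico_abs_gNat_div_sub_le (N : ℕ) :
    ∑ n ∈ Ico 1 N, |gNat (N / n) - gNat (N / (n + 1))| ≤ harmonic N := by
  refine (sum_Ico_abs_sum_Icc_div_sub_le _ N).trans ?_
  rw [harmonic_eq_sum_Icc]
  push_cast
  refine sum_le_sum fun k _ => ?_
  rw [abs_div, Nat.abs_cast, div_eq_mul_inv]
  exact mul_le_of_le_one_left (by positivity) (abs_moebius_cast_le_one k)

theorem sum_Icc_mul_eq_sub_sum_Ico {R : Type*} [CommRing R] (a c : ℕ → R) (N : ℕ) :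
    ∑ n ∈ Icc 1 N, a n * c n =
      (∑ k ∈ Icc 1 N, a k) * c N -
        ∑ n ∈ Ico 1 N, (∑ k ∈ Icc 1 n, a k) * (c (n + 1) - c n) := by
  induction N with
  | zero => simp
  | succ N ih =>
    rcases N.eq_zero_or_pos with rfl | hN
    · simp
    rw [sum_Icc_succ_top (by omega), sum_Icc_succ_top (by omega), ih, sum_Ico_succ_top hN]
    ring

/-- `n (c n - c (n + 1))` for `c n = gNat (N / n) / n`, the coefficient of the relative error
`θ(n) / n - 1` after summation by parts. -/
noncomputable def gDiff (N n : ℕ) : ℝ :=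
  n * (gNat (N / n) / n - gNat (N / (n + 1)) / (n + 1))

theorem abs_gDiff_le (N : ℕ) {n : ℕ} (hn : n ≠ 0) :
    |gDiff N n| ≤ |gNat (N / n) - gNat (N / (n + 1))| + 1 / (n + 1) := by
  have hdecomp : gDiff N n =
      (gNat (N / n) - gNat (N / (n + 1))) + gNat (N / (n + 1)) / (n + 1) := by
    rw [gDiff]
    field_simp
    ring
  rw [hdecomp]
  refine (abs_add_le _ _).trans (add_le_add le_rfl ?_)
  rw [abs_div, abs_of_pos (by positivity : (0 : ℝ) < n + 1)]
  exact div_le_div_of_nonneg_right (abs_gNat_le_one _) (by positivity)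

theorem abs_gDiff_le_three (N : ℕ) {n : ℕ} (hn : n ≠ 0) : |gDiff N n| ≤ 3 := by
  refine (abs_gDiff_le N hn).trans ?_
  have hsub := (abs_sub _ _).trans
    (add_le_add (abs_gNat_le_one (N / n)) (abs_gNat_le_one (N / (n + 1))))
  have hinv : 1 / ((n : ℝ) + 1) ≤ 1 := by
    rw [div_le_one (by positivity)]
    linarith [(n.cast_nonneg : (0 : ℝ) ≤ n)]
  linarith

theorem sum_Ico_abs_gDiff_le (N : ℕ) : ∑ n ∈ Ico 1 N, |gDiff N n| ≤ 2 * harmonic N := by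
  have hinv : ∑ n ∈ Ico 1 N, 1 / ((n : ℝ) + 1) ≤ harmonic N := by
    rw [harmonic_eq_sum_Icc]
    push_cast
    calc ∑ n ∈ Ico 1 N, 1 / ((n : ℝ) + 1) ≤ ∑ n ∈ Ico 1 N, (n : ℝ)⁻¹ :=
          sum_le_sum fun n hn => by
            have : (0 : ℝ) < n := by exact_mod_cast (mem_Ico.1 hn).1
            rw [one_div]
            exact inv_anti₀ this (by linarith)
      _ ≤ ∑ n ∈ Icc 1 N, (n : ℝ)⁻¹ :=
          sum_le_sum_of_subset_of_nonneg Ico_subset_Icc_self fun _ _ _ => by positivity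
  calc ∑ n ∈ Ico 1 N, |gDiff N n|
      ≤ ∑ n ∈ Ico 1 N, (|gNat (N / n) - gNat (N / (n + 1))| + 1 / ((n : ℝ) + 1)) :=
        sum_le_sum fun n hn => abs_gDiff_le N (by have := (mem_Ico.1 hn).1; omega)
    _ ≤ 2 * harmonic N := by
        rw [sum_add_distrib]
        linarith [sum_Ico_abs_gNat_div_sub_le N]

theorem sum_Icc_log_prime_sub_one (n : ℕ) :
    ∑ k ∈ Icc 1 n, ((if k.Prime then Real.log k else 0) - 1) = theta n - n := by
  simp [theta, sum_sub_distrib, sum_filter]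

theorem H_eq_theta_div_add_sum {x : ℝ} (hx : 1 ≤ x) :
    H x = theta ⌊x⌋₊ / ⌊x⌋₊ +
      ∑ n ∈ Ico 1 ⌊x⌋₊, (theta n / n - 1) * gDiff ⌊x⌋₊ n := by
  set N := ⌊x⌋₊
  have hN : 1 ≤ N := Nat.one_le_floor_iff x |>.2 hx
  set c : ℕ → ℝ := fun n => gNat (N / n) / n
  have hH : H x - 1 = ∑ n ∈ Icc 1 N, ((if n.Prime then Real.log n else 0) - 1) * c n := by
    simp only [sub_mul, one_mul, sum_sub_distrib, c, sum_Icc_gNat_div_div hN]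
    rw [H, sum_filter]
    congr 1
    refine sum_congr rfl fun n _ => ?_
    rw [g_eq_gNat_floor, Nat.floor_div_natCast]
    split_ifs <;> ring
  have hlast : (theta N - N) * c N = theta N / N - 1 := by
    have hN0 : (N : ℝ) ≠ 0 := by positivity
    simp only [c, Nat.div_self hN, gNat, Icc_self, sum_singleton,
      ArithmeticFunction.moebius_apply_one, Int.cast_one, Nat.cast_one, div_one]
    field_simp
  have hterm (n : ℕ) (hn : n ∈ Ico 1 N) :
      (theta n - n) * (c (n + 1) - c n) = -((theta n / n - 1) * gDiff N n) := by
    have hn0 : (n : ℝ) ≠ 0 := by have := (mem_Ico.1 hn).1; positivity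
    simp only [c, gDiff]
    field_simp
    push_cast
    ring
  simp only [sum_Icc_mul_eq_sub_sum_Ico, sum_Icc_log_prime_sub_one] at hH
  rw [sum_congr rfl hterm, sum_neg_distrib, hlast] at hH
  linarith

/-- Only the finitely many `n` with `|w n| > ε` escape the bound `ε |v n|`, and their
contribution is bounded independently of `s` and `v`. -/
theorem exists_abs_sum_mul_le_of_tendsto_zero {w : ℕ → ℝ} (hw : Tendsto w atTop (nhds 0))
    {B ε : ℝ} (hB : 0 ≤ B) (hε : 0 < ε) :
    ∃ K, ∀ (s : Finset ℕ) (v : ℕ → ℝ), (∀ n ∈ s, |v n| ≤ B) →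
      |∑ n ∈ s, w n * v n| ≤ K + ε * ∑ n ∈ s, |v n| := by
  obtain ⟨N₀, hN₀⟩ := Metric.tendsto_atTop.1 hw ε hε
  refine ⟨∑ n ∈ range N₀, B * |w n|, fun s v hv => ?_⟩
  have hterm : ∀ n ∈ s, |w n * v n| ≤ (if n < N₀ then B * |w n| else 0) + ε * |v n| := by
    intro n hn
    rw [abs_mul]
    split_ifs with hn₀
    · nlinarith [hv n hn, abs_nonneg (w n), abs_nonneg (v n)]
    · have hwn : |w n| ≤ ε := by simpa using (hN₀ n (not_lt.1 hn₀)).le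
      nlinarith [abs_nonneg (v n)]
  calc |∑ n ∈ s, w n * v n| ≤ ∑ n ∈ s, |w n * v n| := abs_sum_le_sum_abs _ _
    _ ≤ ∑ n ∈ s, ((if n < N₀ then B * |w n| else 0) + ε * |v n|) := sum_le_sum hterm
    _ = ∑ n ∈ s with n < N₀, B * |w n| + ε * ∑ n ∈ s, |v n| := by
        rw [sum_add_distrib, sum_filter, mul_sum]
    _ ≤ ∑ n ∈ range N₀, B * |w n| + ε * ∑ n ∈ s, |v n| := by
        gcongr
        exact fun n hn => mem_range.2 (mem_filter.1 hn).2

theorem isLittleO_of_forall_exists_abs_le {α : Type*} {l : Filter α} {f L : α → ℝ}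
    (hL : Tendsto L l atTop) (h : ∀ ε > 0, ∃ K, ∀ᶠ x in l, |f x| ≤ K + ε * L x) :
    f =o[l] L := by
  refine IsLittleO.of_bound fun c hc => ?_
  obtain ⟨K, hK⟩ := h (c / 2) (half_pos hc)
  filter_upwards [hK, hL.eventually_ge_atTop (2 * K / c), hL.eventually_ge_atTop 0]
    with x hfx hLK hL0
  rw [Real.norm_eq_abs, Real.norm_eq_abs, abs_of_nonneg hL0]
  rw [div_le_iff₀ hc] at hLK
  linarith

theorem exists_abs_H_sub_theta_div_le (hθ : Tendsto (fun n : ℕ => theta n / n) atTop (nhds 1))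
    {ε : ℝ} (hε : 0 < ε) :
    ∃ K, ∀ x ≥ 1, |H x - theta ⌊x⌋₊ / ⌊x⌋₊| ≤ K + ε * Real.log x := by
  have hw : Tendsto (fun n : ℕ => theta n / n - 1) atTop (nhds 0) := by
    simpa using hθ.sub_const 1
  obtain ⟨K, hK⟩ := exists_abs_sum_mul_le_of_tendsto_zero hw zero_le_three (half_pos hε)
  refine ⟨K + ε, fun x hx => ?_⟩
  have hN : (0 : ℝ) < ⌊x⌋₊ := by exact_mod_cast Nat.one_le_floor_iff x |>.2 hx
  rw [H_eq_theta_div_add_sum hx, add_sub_cancel_left]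
  calc _ ≤ K + ε / 2 * ∑ n ∈ Ico 1 ⌊x⌋₊, |gDiff ⌊x⌋₊ n| :=
        hK _ _ fun n hn => abs_gDiff_le_three _ (by have := (mem_Ico.1 hn).1; omega)
    _ ≤ K + ε / 2 * (2 * (1 + Real.log ⌊x⌋₊)) := by
        gcongr
        exact (sum_Ico_abs_gDiff_le _).trans (by gcongr; exact harmonic_le_one_add_log _)
    _ ≤ K + ε + ε * Real.log x := by
        have := Real.log_le_log hN (Nat.floor_le (by linarith))
        nlinarith

theorem H_div_log_tendsto_zero
    (hθ : Tendsto (fun x : ℝ => theta x / x) atTop (nhds 1)) :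
    Tendsto (fun x : ℝ => H x / Real.log x) atTop (nhds 0) := by
  have hθℕ : Tendsto (fun n : ℕ => theta n / n) atTop (nhds 1) :=
    hθ.comp tendsto_natCast_atTop_atTop
  have hrem : (fun x => H x - theta ⌊x⌋₊ / ⌊x⌋₊) =o[atTop] Real.log :=
    isLittleO_of_forall_exists_abs_le Real.tendsto_log_atTop fun ε hε =>
      (exists_abs_H_sub_theta_div_le hθℕ hε).imp fun _ hK => eventually_ge_atTop 1 |>.mono hK
  have hmain : (fun x : ℝ => theta ⌊x⌋₊ / ⌊x⌋₊) =o[atTop] Real.log :=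
    ((hθℕ.comp tendsto_nat_floor_atTop).isBigO_one ℝ).trans_isLittleO
      ((isLittleO_one_left_iff ℝ).2 (tendsto_norm_atTop_atTop.comp Real.tendsto_log_atTop))
  exact ((hrem.add hmain).congr_left fun x => sub_add_cancel _ _).tendsto_div_nhds_zero
end
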